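/- Let A, B ⊆ ℝ^d be finite sets with B proper d-dimensional and A ⊆ conv B, and let k be a positive integer. Suppose S_1 = conv B_1, …, S_n = conv B_n is a simplicial decomposition of conv B as in the decomposition lemma (each B_i ⊆ B affinely independent with |B_i| = d+1, S_i ∩ B = B_i, the simplices pairwise in regular position, and ⋃ S_i = conv B). Define A_1 = A ∩ S_1 and A_i = A ∩ (S_i \ (S_1 ∪ ⋯ ∪ S_{i−1})) for i ≥ 2. Then the sets A_i + kB_i, for 1 ≤ i ≤ n, are pairwise disjoint; consequently |A + kB| ≥ Σ_{i=1}^n |A_i + kB_i|. -/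

import Mathlib

/-!
If `x = a + u` with `a ∈ conv Bᵢ` and `u ∈ k Bᵢ`, then `x ∈ (k + 1) conv Bᵢ`. So a common point `x`
of `Aᵢ + k Bᵢ` and `Aⱼ + k Bⱼ`, `i < j`, lies in `(k + 1) (conv Bᵢ ∩ conv Bⱼ) = (k + 1) conv (Bᵢ ∩ Bⱼ)`.
Writing `x = a' + u'` with `a' ∈ Aⱼ`, the point `x / (k + 1)` lies in the open segment from `a'` to
`u' / k ∈ conv Bⱼ` (or equals `a'` if `k = 0`). Since `conv (Bᵢ ∩ Bⱼ)` is a face of the simplex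
`conv Bⱼ`, `a'` lies in it, hence in `conv Bᵢ`, contradicting the definition of `Aⱼ`. The
cardinality bound follows from disjointness.
-/

open Pointwise

/-- The `k`-fold sumset `B + B + ⋯ + B` (`k` summands). -/
def kfoldSumset {α : Type*} [AddCommMonoid α] [DecidableEq α]
    (k : ℕ) (B : Finset α) : Finset α :=
  ∑ _i ∈ Finset.range k, B

section kfold

variable {α : Type*} [AddCommMonoid α] [DecidableEq α]

theorem kfoldSumset_zero (B : Finset α) : kfoldSumset 0 B = 0 :=
  Finset.sum_range_zero _

theorem kfoldSumset_succ (k : ℕ) (B : Finset α) :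
    kfoldSumset (k + 1) B = kfoldSumset k B + B :=
  Finset.sum_range_succ _ k

theorem kfoldSumset_mono (k : ℕ) {B C : Finset α} (h : B ⊆ C) :
    kfoldSumset k B ⊆ kfoldSumset k C := by
  induction k with
  | zero => simp only [kfoldSumset_zero, subset_refl]
  | succ k ih =>
    rw [kfoldSumset_succ, kfoldSumset_succ]
    exact Finset.add_subset_add ih h

end kfold

section convex

variable {𝕜 E : Type*} [Field 𝕜] [LinearOrder 𝕜] [IsStrictOrderedRing 𝕜]
  [AddCommGroup E] [Module 𝕜 E]

theorem kfoldSumset_subset_smul_convexHull [DecidableEq E] {B : Finset E} (hB : B.Nonempty)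
    (k : ℕ) : (kfoldSumset k B : Set E) ⊆ (k : 𝕜) • convexHull 𝕜 (B : Set E) := by
  induction k with
  | zero =>
    rw [kfoldSumset_zero, Finset.coe_zero, Nat.cast_zero,
      Set.zero_smul_set (convexHull_nonempty_iff.2 (Finset.coe_nonempty.2 hB))]
  | succ k ih =>
    rw [kfoldSumset_succ, Finset.coe_add, Nat.cast_succ,
      (convex_convexHull 𝕜 _).add_smul (Nat.cast_nonneg k) zero_le_one, one_smul]
    exact Set.add_subset_add ih (subset_convexHull 𝕜 _)

theorem AffineIndependent.isExtreme_convexHull_of_subset {s t : Finset E}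
    (hs : AffineIndependent 𝕜 ((↑) : s → E)) (hts : t ⊆ s) :
    IsExtreme 𝕜 (convexHull 𝕜 (s : Set E)) (convexHull 𝕜 (t : Set E)) := by
  classical
  refine ⟨convexHull_mono (Finset.coe_subset.2 hts), ?_⟩
  rintro x hx y hy z hz ⟨a, b, ha, hb, hab, rfl⟩
  obtain ⟨wx, hwx₀, hwx₁, rfl⟩ := Finset.mem_convexHull'.1 hx
  obtain ⟨wy, hwy₀, hwy₁, rfl⟩ := Finset.mem_convexHull'.1 hy
  obtain ⟨wz, -, hwz₁, hwz⟩ := Finset.mem_convexHull'.1 hz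
  -- Barycentric coordinates are unique, and those of `z` vanish off `t`.
  have hcoord : ∀ p ∈ s, (if p ∈ t then wz p else 0) = a * wx p + b * wy p := by
    refine hs.eq_of_sum_eq_sum_subtype ?_ ?_
    · rw [Finset.sum_ite_mem, Finset.inter_eq_right.2 hts, hwz₁, Finset.sum_add_distrib,
        ← Finset.mul_sum, ← Finset.mul_sum, hwx₁, hwy₁, mul_one, mul_one, hab]
    · simp only [ite_smul, zero_smul, Finset.sum_ite_mem, Finset.inter_eq_right.2 hts, hwz,
        add_smul, mul_smul, Finset.sum_add_distrib, Finset.smul_sum]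
  have hwx_zero : ∀ p ∈ s, p ∉ t → wx p = 0 := fun p hp hpt ↦ by
    have hsum := (hcoord p hp).symm
    rw [if_neg hpt] at hsum
    have hterms := (add_eq_zero_iff_of_nonneg (mul_nonneg ha.le (hwx₀ p hp))
      (mul_nonneg hb.le (hwy₀ p hp))).1 hsum
    exact (mul_eq_zero.1 hterms.1).resolve_left ha.ne'
  refine Finset.mem_convexHull'.2 ⟨wx, fun p hp ↦ hwx₀ p (hts hp), ?_, ?_⟩
  · exact (Finset.sum_subset hts hwx_zero).trans hwx₁
  · exact Finset.sum_subset hts fun p hp hpt ↦ by rw [hwx_zero p hp hpt, zero_smul]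

theorem IsExtreme.mem_of_add_mem_smul {A F : Set E} (hAF : IsExtreme 𝕜 A F) {r : 𝕜} (hr : 0 ≤ r)
    {x y : E} (hx : x ∈ A) (hy : y ∈ r • A) (hxy : x + y ∈ (1 + r) • F) : x ∈ F := by
  rcases hr.eq_or_lt with rfl | hr
  · rw [Set.mem_zero.1 (Set.zero_smul_set_subset A hy), add_zero, add_zero, one_smul] at hxy
    exact hxy
  obtain ⟨z, hz, rfl⟩ := hy
  obtain ⟨w, hw, hxzw : (1 + r) • w = x + r • z⟩ := hxy
  have hr₁ : (0 : 𝕜) < 1 + r := by positivity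
  refine hAF.left_mem_of_mem_openSegment hx hz hw
    ⟨1 / (1 + r), r / (1 + r), by positivity, by positivity, by field_simp, ?_⟩
  rw [← inv_smul_smul₀ hr₁.ne' w, hxzw, smul_add, smul_smul, one_div, div_eq_inv_mul]

theorem mem_convexHull_of_add_kfoldSumset_eq [DecidableEq E] {s t : Finset E}
    (ht : AffineIndependent 𝕜 ((↑) : t → E))
    (hst : convexHull 𝕜 (s : Set E) ∩ convexHull 𝕜 (t : Set E) =
      convexHull 𝕜 ((s ∩ t : Finset E) : Set E))
    (k : ℕ) {a a' u u' : E} (ha : a ∈ convexHull 𝕜 (s : Set E))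
    (ha' : a' ∈ convexHull 𝕜 (t : Set E)) (hu : u ∈ kfoldSumset k s)
    (hu' : u' ∈ kfoldSumset k t) (h : a + u = a' + u') :
    a' ∈ convexHull 𝕜 (s : Set E) := by
  have hkfold : ∀ {p : Finset E}, (convexHull 𝕜 (p : Set E)).Nonempty →
      (kfoldSumset k p : Set E) ⊆ (k : 𝕜) • convexHull 𝕜 (p : Set E) := fun hp ↦
    kfoldSumset_subset_smul_convexHull (Finset.coe_nonempty.1 (convexHull_nonempty_iff.1 hp)) k
  have hadd : ∀ {p : Finset E} {b v : E}, b ∈ convexHull 𝕜 (p : Set E) → v ∈ kfoldSumset k p →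
      b + v ∈ (1 + k : 𝕜) • convexHull 𝕜 (p : Set E) := fun hb hv ↦ by
    rw [(convex_convexHull 𝕜 _).add_smul zero_le_one (Nat.cast_nonneg k), one_smul]
    exact Set.add_mem_add hb (hkfold ⟨_, hb⟩ hv)
  have hmem : a' + u' ∈ (1 + k : 𝕜) • convexHull 𝕜 ((s ∩ t : Finset E) : Set E) := by
    rw [← hst, Set.smul_set_inter₀ (by positivity)]
    exact ⟨h ▸ hadd ha hu, hadd ha' hu'⟩
  exact convexHull_mono (Finset.coe_subset.2 Finset.inter_subset_left)
    ((ht.isExtreme_convexHull_of_subset Finset.inter_subset_right).mem_of_add_mem_smul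
      (Nat.cast_nonneg k) ha' (hkfold ⟨_, ha'⟩ hu') hmem)

end convex

theorem decomposition_pieces_disjoint_general (d k n : ℕ)
    (A B : Finset (Fin d → ℝ))
    (Bv : Fin n → Finset (Fin d → ℝ))
    (hsub : ∀ i, Bv i ⊆ B)
    (hindep : ∀ i, AffineIndependent ℝ
      (fun p : ((Bv i : Set (Fin d → ℝ))) => (p : Fin d → ℝ)))
    (hreg : ∀ i j, convexHull ℝ ((Bv i : Set (Fin d → ℝ)))
        ∩ convexHull ℝ ((Bv j : Set (Fin d → ℝ)))
      = convexHull ℝ ((Bv i ∩ Bv j : Finset (Fin d → ℝ)) : Set (Fin d → ℝ)))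
    (AF : Fin n → Finset (Fin d → ℝ))
    (hAF : ∀ i a, a ∈ AF i ↔ a ∈ A ∧ a ∈ convexHull ℝ ((Bv i : Set (Fin d → ℝ))) ∧
      ∀ j < i, a ∉ convexHull ℝ ((Bv j : Set (Fin d → ℝ)))) :
    (Set.univ : Set (Fin n)).Pairwise
      (fun i j => Disjoint (AF i + kfoldSumset k (Bv i)) (AF j + kfoldSumset k (Bv j))) ∧
    (A + kfoldSumset k B).card ≥ ∑ i, (AF i + kfoldSumset k (Bv i)).card := by
  classical
  have hdisj : Pairwise (Function.onFun Disjoint fun i ↦ AF i + kfoldSumset k (Bv i)) := by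
    refine (pairwise_disjoint_on _).2 fun i j hij ↦ Finset.disjoint_left.2 ?_
    intro x hxi hxj
    obtain ⟨a, ha, u, hu, rfl⟩ := Finset.mem_add.1 hxi
    obtain ⟨a', ha', u', hu', hx⟩ := Finset.mem_add.1 hxj
    obtain ⟨-, ha'j, ha'_notMem⟩ := (hAF j a').1 ha'
    exact ha'_notMem i hij (mem_convexHull_of_add_kfoldSumset_eq (hindep j) (hreg i j) k
      ((hAF i a).1 ha).2.1 ha'j hu hu' hx.symm)
  refine ⟨fun i _ j _ hij ↦ hdisj hij, ?_⟩
  rw [ge_iff_le, ← Finset.card_biUnion fun i _ j _ hij ↦ hdisj hij]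
  exact Finset.card_le_card <| Finset.biUnion_subset.2 fun i _ ↦
    Finset.add_subset_add (fun a ha ↦ ((hAF i a).1 ha).1) (kfoldSumset_mono k (hsub i))

theorem decomposition_pieces_disjoint (d k n : ℕ) (hk : 0 < k)
    (A B : Finset (Fin d → ℝ))
    (hBspan : affineSpan ℝ (B : Set (Fin d → ℝ)) = ⊤)
    (hAB : (A : Set (Fin d → ℝ)) ⊆ convexHull ℝ (B : Set (Fin d → ℝ)))
    (Bv : Fin n → Finset (Fin d → ℝ))
    (hsub : ∀ i, Bv i ⊆ B)
    (hcard : ∀ i, (Bv i).card = d + 1)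
    (hindep : ∀ i, AffineIndependent ℝ
      (fun p : ((Bv i : Set (Fin d → ℝ))) => (p : Fin d → ℝ)))
    (hmeet : ∀ i, convexHull ℝ ((Bv i : Set (Fin d → ℝ))) ∩ (B : Set (Fin d → ℝ))
      = (Bv i : Set (Fin d → ℝ)))
    (hreg : ∀ i j, convexHull ℝ ((Bv i : Set (Fin d → ℝ)))
        ∩ convexHull ℝ ((Bv j : Set (Fin d → ℝ)))
      = convexHull ℝ ((Bv i ∩ Bv j : Finset (Fin d → ℝ)) : Set (Fin d → ℝ)))
    (hcover : convexHull ℝ (B : Set (Fin d → ℝ))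
      = ⋃ i, convexHull ℝ ((Bv i : Set (Fin d → ℝ))))
    (AF : Fin n → Finset (Fin d → ℝ))
    (hAF : ∀ i a, a ∈ AF i ↔ a ∈ A ∧ a ∈ convexHull ℝ ((Bv i : Set (Fin d → ℝ))) ∧
      ∀ j < i, a ∉ convexHull ℝ ((Bv j : Set (Fin d → ℝ)))) :
    (Set.univ : Set (Fin n)).Pairwise
      (fun i j => Disjoint (AF i + kfoldSumset k (Bv i)) (AF j + kfoldSumset k (Bv j))) ∧
    (A + kfoldSumset k B).card ≥ ∑ i, (AF i + kfoldSumset k (Bv i)).card :=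
  decomposition_pieces_disjoint_general d k n A B Bv hsub hindep hreg AF hAF
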